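/- In a symmetric setting (all agents have the same type set Θ_0 and the same valuation function), let r^0 = r be a non-deficit anonymous Groves mechanism and define r^{k+1}(θ_{-i}) := ((n−1)/n)·r^k(θ_{-i}) + (1/n)·inf_{θ'_i ∈ Θ_0} { VCG(θ'_i,θ_{-i}) − Σ_{j≠i} r^k(θ'_{-j}) }, where all infima are assumed to exist in ℝ. Then the sequence r^k converges pointwise as k → ∞ to a function r^∞ : Θ_0^{n−1} → ℝ, and r^∞ determines a non-deficit anonymous Groves mechanism that is individually undominated among non-deficit Groves mechanisms. -/

import Mathlib

/-!
Write `V` for the total VCG payment and `θ ∘ i.succAbove` for `θ_{-i}`. One averaging step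
`g ↦ g'` always yields a non-deficit mechanism: summing the recursion over the agents, the
excess `V θ - ∑ g` is shared out exactly once. If `g` itself is non-deficit, every value of
the infimum is at least `g (θ_{-i})`, so `g ≤ g'`; anonymity is preserved because `V` is
symmetric under permuting agents (efficiency of `f`). The rebates therefore increase and are
bounded by non-deficit, hence converge, and the infima converge to the same limit `r^∞`.
If a non-deficit `r'` dominated `r^∞`, strictly for agent `i` at `θ`, then for large `k` some
type `x` of `i` would leave agent `i` less than `r' i θ` after paying the others
`r^k ≤ r^∞ ≤ r'`, so `r'` would run a deficit at `update θ i x`.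
-/

noncomputable def VCGi {N : ℕ} {D : Type} [Fintype D] [Nonempty D]
    {Θ : Type} (v : D → Θ → ℝ) (f : (Fin N → Θ) → D)
    (i : Fin N) (θ : Fin N → Θ) : ℝ :=
  (Finset.univ.sup' Finset.univ_nonempty fun d =>
      ∑ j ∈ Finset.univ.erase i, v d (θ j)) -
    ∑ j ∈ Finset.univ.erase i, v (f θ) (θ j)

noncomputable def VCGtot {N : ℕ} {D : Type} [Fintype D] [Nonempty D]
    {Θ : Type} (v : D → Θ → ℝ) (f : (Fin N → Θ) → D)
    (θ : Fin N → Θ) : ℝ :=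
  ∑ i, VCGi v f i θ

open Finset Filter Function Topology

section Anonymous

variable {Θ β : Type*}

def IsAnonymous {m : ℕ} (g : (Fin m → Θ) → β) : Prop :=
  ∀ (x : Fin m → Θ) (σ : Equiv.Perm (Fin m)), g (x ∘ σ) = g x

lemma Fin.exists_perm_comp_succAbove {N : ℕ} (τ : Equiv.Perm (Fin (N + 1))) (j : Fin (N + 1)) :
    ∃ π : Equiv.Perm (Fin N), τ ∘ j.succAbove = (τ j).succAbove ∘ π := by
  let τ' : {a // a ≠ j} ≃ {b // b ≠ τ j} := τ.subtypeEquiv fun a => τ.injective.ne_iff.symm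
  refine ⟨(finSuccAboveEquiv j).trans (τ'.trans (finSuccAboveEquiv (τ j)).symm), funext fun m => ?_⟩
  change τ (j.succAbove m) = (finSuccAboveEquiv (τ j)
    ((finSuccAboveEquiv (τ j)).symm (τ' (finSuccAboveEquiv j m)))).1
  rw [Equiv.apply_symm_apply]
  rfl

lemma IsAnonymous.comp_perm_comp_succAbove {n : ℕ} {g : (Fin n → Θ) → β} (hg : IsAnonymous g)
    (θ : Fin (n + 1) → Θ) (τ : Equiv.Perm (Fin (n + 1))) (j : Fin (n + 1)) :
    g ((θ ∘ τ) ∘ j.succAbove) = g (θ ∘ (τ j).succAbove) := by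
  obtain ⟨π, hπ⟩ := Fin.exists_perm_comp_succAbove τ j
  rw [comp_assoc, hπ, ← comp_assoc, hg]

lemma IsAnonymous.sum_erase_comp_perm {n : ℕ} [AddCommMonoid β] {g : (Fin n → Θ) → β}
    (hg : IsAnonymous g) (θ : Fin (n + 1) → Θ) (τ : Equiv.Perm (Fin (n + 1))) (i : Fin (n + 1)) :
    ∑ j ∈ univ.erase i, g ((θ ∘ τ) ∘ j.succAbove) =
      ∑ j ∈ univ.erase (τ i), g (θ ∘ j.succAbove) := by
  simp only [hg.comp_perm_comp_succAbove]
  exact sum_equiv τ (by simp) fun _ _ => rfl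

lemma exists_comp_succAbove_eq [Nonempty Θ] {n : ℕ} (i : Fin (n + 1)) (x : Fin n → Θ) :
    ∃ θ : Fin (n + 1) → Θ, θ ∘ i.succAbove = x :=
  ⟨i.insertNth (Classical.arbitrary Θ) x, Fin.insertNth_comp_succAbove i _ x⟩

end Anonymous

section VCG

variable {n : ℕ} {D : Type} [Fintype D] [Nonempty D] {Θ : Type}
  (v : D → Θ → ℝ) (f : (Fin (n + 1) → Θ) → D)

lemma VCGtot_eq_of_efficient
    (hf : ∀ (θ : Fin (n + 1) → Θ) (d : D), ∑ i, v d (θ i) ≤ ∑ i, v (f θ) (θ i))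
    (θ : Fin (n + 1) → Θ) :
    VCGtot v f θ = (∑ i, univ.sup' univ_nonempty fun d => ∑ j ∈ univ.erase i, v d (θ j))
        - n * univ.sup' univ_nonempty fun d => ∑ j, v d (θ j) := by
  have hW : (univ.sup' univ_nonempty fun d => ∑ j, v d (θ j)) = ∑ j, v (f θ) (θ j) :=
    le_antisymm (sup'_le _ _ fun d _ => hf θ d) (le_sup' (fun d => ∑ j, v d (θ j)) (mem_univ _))
  simp only [VCGtot, VCGi, hW, sum_sub_distrib, sum_erase_eq_sub (mem_univ _), sum_const,
    card_univ, Fintype.card_fin, nsmul_eq_mul]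
  push_cast
  ring

lemma VCGtot_comp_perm
    (hf : ∀ (θ : Fin (n + 1) → Θ) (d : D), ∑ i, v d (θ i) ≤ ∑ i, v (f θ) (θ i))
    (θ : Fin (n + 1) → Θ) (τ : Equiv.Perm (Fin (n + 1))) :
    VCGtot v f (θ ∘ τ) = VCGtot v f θ := by
  have herase : ∀ (d : D) (i : Fin (n + 1)),
      ∑ j ∈ univ.erase i, v d ((θ ∘ τ) j) = ∑ j ∈ univ.erase (τ i), v d (θ j) :=
    fun d i => sum_equiv τ (by simp) fun _ _ => rfl
  have hfull : ∀ d : D, ∑ j, v d ((θ ∘ τ) j) = ∑ j, v d (θ j) :=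
    fun d => Equiv.sum_comp τ fun j => v d (θ j)
  rw [VCGtot_eq_of_efficient v f hf, VCGtot_eq_of_efficient v f hf]
  simp only [herase, hfull]
  rw [Equiv.sum_comp τ fun i => univ.sup' univ_nonempty fun d => ∑ j ∈ univ.erase i, v d (θ j)]

end VCG

section Averaging

variable {n : ℕ} {Θ : Type*} (V : (Fin (n + 1) → Θ) → ℝ)

/-- What agent `i` can still be paid without a deficit at `update θ i x` when every other agent
`j` receives `g` of its `θ_{-j}`, as `x` ranges over the types of `i`. -/
def residualSet (g : (Fin n → Θ) → ℝ) (i : Fin (n + 1)) (θ : Fin (n + 1) → Θ) : Set ℝ :=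
  {y | ∃ x : Θ, y = V (update θ i x) - ∑ j ∈ univ.erase i, g (update θ i x ∘ j.succAbove)}

noncomputable def residualInf (g : (Fin n → Θ) → ℝ) (i : Fin (n + 1)) (θ : Fin (n + 1) → Θ) : ℝ :=
  sInf (residualSet V g i θ)

def NonDeficit (g : (Fin n → Θ) → ℝ) : Prop :=
  ∀ θ : Fin (n + 1) → Θ, ∑ i : Fin (n + 1), g (θ ∘ i.succAbove) ≤ V θ

def IsAveragingStep (g g' : (Fin n → Θ) → ℝ) : Prop :=
  ∀ (i : Fin (n + 1)) (θ : Fin (n + 1) → Θ),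
    g' (θ ∘ i.succAbove) =
      ((n : ℝ) / (n + 1)) * g (θ ∘ i.succAbove) + (1 / ((n : ℝ) + 1)) * residualInf V g i θ

variable {V} {g g' : (Fin n → Θ) → ℝ}

lemma averaging_eq_add_div (a b : ℝ) :
    ((n : ℝ) / (n + 1)) * a + (1 / ((n : ℝ) + 1)) * b = a + (b - a) / (n + 1) := by
  field_simp
  ring

lemma mem_residualSet_self (g : (Fin n → Θ) → ℝ) (i : Fin (n + 1)) (θ : Fin (n + 1) → Θ) :
    V θ - ∑ j ∈ univ.erase i, g (θ ∘ j.succAbove) ∈ residualSet V g i θ :=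
  ⟨θ i, by rw [update_eq_self]⟩

lemma residualInf_le {i : Fin (n + 1)} {θ : Fin (n + 1) → Θ}
    (hb : BddBelow (residualSet V g i θ)) :
    residualInf V g i θ ≤ V θ - ∑ j ∈ univ.erase i, g (θ ∘ j.succAbove) :=
  csInf_le hb (mem_residualSet_self g i θ)

lemma NonDeficit.le_sub_sum_erase (h : NonDeficit V g) (i : Fin (n + 1)) (θ : Fin (n + 1) → Θ) :
    g (θ ∘ i.succAbove) ≤ V θ - ∑ j ∈ univ.erase i, g (θ ∘ j.succAbove) := by
  have hθ := h θ
  rw [← add_sum_erase _ _ (mem_univ i)] at hθ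
  linarith

lemma NonDeficit.le_residualInf (h : NonDeficit V g) (i : Fin (n + 1)) (θ : Fin (n + 1) → Θ) :
    g (θ ∘ i.succAbove) ≤ residualInf V g i θ := by
  refine le_csInf ⟨_, mem_residualSet_self g i θ⟩ ?_
  rintro _ ⟨x, rfl⟩
  have hothers : update θ i x ∘ i.succAbove = θ ∘ i.succAbove :=
    Fin.removeNth_update (α := fun _ => Θ) i x θ
  simpa only [hothers] using h.le_sub_sum_erase i (update θ i x)

lemma NonDeficit.le_of_isAveragingStep (h : NonDeficit V g) (hstep : IsAveragingStep V g g')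
    (i : Fin (n + 1)) (θ : Fin (n + 1) → Θ) :
    g (θ ∘ i.succAbove) ≤ g' (θ ∘ i.succAbove) := by
  rw [hstep, averaging_eq_add_div, le_add_iff_nonneg_right]
  exact div_nonneg (sub_nonneg.2 (h.le_residualInf i θ)) (by positivity)

lemma IsAveragingStep.nonDeficit (hstep : IsAveragingStep V g g')
    (hb : ∀ i θ, BddBelow (residualSet V g i θ)) : NonDeficit V g' := by
  intro θ
  have hterm : ∀ i : Fin (n + 1), g' (θ ∘ i.succAbove)
      ≤ g (θ ∘ i.succAbove) + (V θ - ∑ j : Fin (n + 1), g (θ ∘ j.succAbove)) / (n + 1) := by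
    intro i
    have hres := residualInf_le (hb i θ)
    rw [sum_erase_eq_sub (mem_univ i)] at hres
    have hgain : residualInf V g i θ - g (θ ∘ i.succAbove)
        ≤ V θ - ∑ j : Fin (n + 1), g (θ ∘ j.succAbove) := by linarith
    rw [hstep, averaging_eq_add_div]
    exact add_le_add_right (div_le_div_of_nonneg_right hgain (Nat.cast_add_one_pos n).le) _
  calc ∑ i, g' (θ ∘ i.succAbove)
      ≤ ∑ i, (g (θ ∘ i.succAbove) + (V θ - ∑ j : Fin (n + 1), g (θ ∘ j.succAbove)) / (n + 1)) :=
        sum_le_sum fun i _ => hterm i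
    _ = V θ := by
      rw [sum_add_distrib, sum_const, card_univ, Fintype.card_fin, nsmul_eq_mul]
      push_cast
      field_simp
      ring

lemma residualInf_comp_perm (hV : ∀ (θ : Fin (n + 1) → Θ) (τ : Equiv.Perm (Fin (n + 1))),
      V (θ ∘ τ) = V θ)
    (hg : IsAnonymous g) (θ : Fin (n + 1) → Θ) (τ : Equiv.Perm (Fin (n + 1))) (i : Fin (n + 1)) :
    residualInf V g i (θ ∘ τ) = residualInf V g (τ i) θ := by
  refine congrArg sInf (Set.ext fun y => exists_congr fun x => ?_)
  have hupdate : update (θ ∘ τ) i x = update θ (τ i) x ∘ τ := by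
    rw [update_comp_equiv, Equiv.symm_apply_apply]
  rw [hupdate, hV, hg.sum_erase_comp_perm]

lemma IsAnonymous.of_isAveragingStep [Nonempty Θ]
    (hV : ∀ (θ : Fin (n + 1) → Θ) (τ : Equiv.Perm (Fin (n + 1))), V (θ ∘ τ) = V θ)
    (hg : IsAnonymous g) (hstep : IsAveragingStep V g g') : IsAnonymous g' := by
  intro x σ
  obtain ⟨θ, rfl⟩ := exists_comp_succAbove_eq 0 x
  let τ : Equiv.Perm (Fin (n + 1)) := Equiv.Perm.decomposeFin.symm (0, σ)
  have hτ0 : τ 0 = 0 := Equiv.Perm.decomposeFin_symm_apply_zero 0 σ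
  have hτ : (θ ∘ τ) ∘ (0 : Fin (n + 1)).succAbove = (θ ∘ (0 : Fin (n + 1)).succAbove) ∘ σ := by
    funext m
    simp [τ, Fin.succAbove_zero, Equiv.Perm.decomposeFin_symm_apply_succ]
  rw [← hτ, hstep, hstep, residualInf_comp_perm hV hg, hτ0, hτ, hg]

section Sequence

variable {R : ℕ → (Fin n → Θ) → ℝ} {L : (Fin n → Θ) → ℝ}

lemma monotone_of_isAveragingStep [Nonempty Θ] (hND : ∀ k, NonDeficit V (R k))
    (hstep : ∀ k, IsAveragingStep V (R k) (R (k + 1))) (x : Fin n → Θ) :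
    Monotone fun k => R k x := by
  obtain ⟨θ, rfl⟩ := exists_comp_succAbove_eq 0 x
  exact monotone_nat_of_le_succ fun k => (hND k).le_of_isAveragingStep (hstep k) 0 θ

lemma bddAbove_of_isAveragingStep [Nonempty Θ] (hND : ∀ k, NonDeficit V (R k))
    (hstep : ∀ k, IsAveragingStep V (R k) (R (k + 1))) (x : Fin n → Θ) :
    BddAbove (Set.range fun k => R k x) := by
  obtain ⟨θ, rfl⟩ := exists_comp_succAbove_eq 0 x
  refine ⟨V θ - ∑ j ∈ univ.erase (0 : Fin (n + 1)), R 0 (θ ∘ j.succAbove), ?_⟩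
  rintro _ ⟨k, rfl⟩
  have hR0 : ∑ j ∈ univ.erase (0 : Fin (n + 1)), R 0 (θ ∘ j.succAbove)
      ≤ ∑ j ∈ univ.erase (0 : Fin (n + 1)), R k (θ ∘ j.succAbove) :=
    sum_le_sum fun j _ => monotone_of_isAveragingStep hND hstep _ (Nat.zero_le k)
  linarith [(hND k).le_sub_sum_erase 0 θ]

lemma tendsto_residualInf (hstep : ∀ k, IsAveragingStep V (R k) (R (k + 1)))
    (hL : ∀ x, Tendsto (fun k => R k x) atTop (𝓝 (L x))) (i : Fin (n + 1)) (θ : Fin (n + 1) → Θ) :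
    Tendsto (fun k => residualInf V (R k) i θ) atTop (𝓝 (L (θ ∘ i.succAbove))) := by
  have hres : ∀ k, residualInf V (R k) i θ =
      (n + 1) * R (k + 1) (θ ∘ i.succAbove) - n * R k (θ ∘ i.succAbove) := by
    intro k
    rw [hstep k i θ]
    field_simp
    ring
  have hlim := (((hL (θ ∘ i.succAbove)).comp (tendsto_add_atTop_nat 1)).const_mul ((n : ℝ) + 1)).sub
    ((hL (θ ∘ i.succAbove)).const_mul (n : ℝ))
  rw [show L (θ ∘ i.succAbove) = (n + 1) * L (θ ∘ i.succAbove) - n * L (θ ∘ i.succAbove) by ring]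
  simpa only [hres, comp_apply] using hlim

lemma not_exists_dominating (hle : ∀ k x, R k x ≤ L x)
    (hres : ∀ i θ, Tendsto (fun k => residualInf V (R k) i θ) atTop (𝓝 (L (θ ∘ i.succAbove)))) :
    ¬ ∃ r' : Fin (n + 1) → (Fin (n + 1) → Θ) → ℝ,
      (∀ (i : Fin (n + 1)) (θ θ' : Fin (n + 1) → Θ),
        (∀ j, j ≠ i → θ j = θ' j) → r' i θ = r' i θ') ∧
      (∀ θ : Fin (n + 1) → Θ, ∑ i, r' i θ ≤ V θ) ∧
      (∀ (i : Fin (n + 1)) (θ : Fin (n + 1) → Θ), L (θ ∘ i.succAbove) ≤ r' i θ) ∧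
      (∃ (i : Fin (n + 1)) (θ : Fin (n + 1) → Θ), L (θ ∘ i.succAbove) < r' i θ) := by
  rintro ⟨r', hlocal, hnd, hdom, i, θ, hlt⟩
  obtain ⟨k, hk⟩ := ((hres i θ).eventually_lt_const hlt).exists
  obtain ⟨_, ⟨x, rfl⟩, hx⟩ := exists_lt_of_csInf_lt ⟨_, mem_residualSet_self (R k) i θ⟩ hk
  have hi : r' i (update θ i x) = r' i θ := hlocal i _ θ fun j hj => update_of_ne hj x θ
  have hothers : ∑ j ∈ univ.erase i, R k (update θ i x ∘ j.succAbove)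
      ≤ ∑ j ∈ univ.erase i, r' j (update θ i x) :=
    sum_le_sum fun j _ => (hle k _).trans (hdom j _)
  have hbudget := hnd (update θ i x)
  rw [← add_sum_erase _ _ (mem_univ i)] at hbudget
  linarith

end Sequence

end Averaging

theorem stmt_10_general {n : ℕ} {D : Type} [Fintype D] [Nonempty D]
    {Θ : Type} [Nonempty Θ]
    (v : D → Θ → ℝ) (f : (Fin (n+1) → Θ) → D)
    (hf : ∀ (θ : Fin (n+1) → Θ) (d : D),
      ∑ i, v d (θ i) ≤ ∑ i, v (f θ) (θ i))
    (r : (Fin n → Θ) → ℝ)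
    (hperm : ∀ (x : Fin n → Θ) (σ : Equiv.Perm (Fin n)),
      r (fun i => x (σ⁻¹ i)) = r x)
    (hnd : ∀ θ : Fin (n+1) → Θ,
      ∑ i : Fin (n+1), r (θ ∘ i.succAbove) ≤ VCGtot v f θ)
    (R : ℕ → (Fin n → Θ) → ℝ) (hR0 : R 0 = r)
    (hbdd : ∀ (k : ℕ) (i : Fin (n+1)) (θ : Fin (n+1) → Θ),
      BddBelow {y : ℝ | ∃ x : Θ, y = VCGtot v f (Function.update θ i x) -
        ∑ j ∈ Finset.univ.erase i, R k (Function.update θ i x ∘ j.succAbove)})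
    (hrec : ∀ (k : ℕ) (i : Fin (n+1)) (θ : Fin (n+1) → Θ),
      R (k+1) (θ ∘ i.succAbove) =
        ((n : ℝ) / (n+1)) * R k (θ ∘ i.succAbove) +
        (1 / ((n : ℝ)+1)) * sInf {y : ℝ | ∃ x : Θ,
          y = VCGtot v f (Function.update θ i x) -
            ∑ j ∈ Finset.univ.erase i, R k (Function.update θ i x ∘ j.succAbove)}) :
    ∃ Rinf : (Fin n → Θ) → ℝ,
      (∀ x : Fin n → Θ,
        Filter.Tendsto (fun k => R k x) Filter.atTop (nhds (Rinf x))) ∧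
      (∀ (x : Fin n → Θ) (σ : Equiv.Perm (Fin n)),
        Rinf (fun i => x (σ⁻¹ i)) = Rinf x) ∧
      (∀ θ : Fin (n+1) → Θ,
        ∑ i : Fin (n+1), Rinf (θ ∘ i.succAbove) ≤ VCGtot v f θ) ∧
      ¬ ∃ r' : Fin (n+1) → (Fin (n+1) → Θ) → ℝ,
        (∀ (i : Fin (n+1)) (θ θ' : Fin (n+1) → Θ),
          (∀ j, j ≠ i → θ j = θ' j) → r' i θ = r' i θ') ∧
        (∀ θ : Fin (n+1) → Θ, ∑ i, r' i θ ≤ VCGtot v f θ) ∧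
        (∀ (i : Fin (n+1)) (θ : Fin (n+1) → Θ), Rinf (θ ∘ i.succAbove) ≤ r' i θ) ∧
        (∃ (i : Fin (n+1)) (θ : Fin (n+1) → Θ), Rinf (θ ∘ i.succAbove) < r' i θ) := by
  have hstep : ∀ k, IsAveragingStep (VCGtot v f) (R k) (R (k + 1)) := hrec
  have hND : ∀ k, NonDeficit (VCGtot v f) (R k)
    | 0 => hR0 ▸ hnd
    | k + 1 => (hstep k).nonDeficit (hbdd k)
  have hanon (k : ℕ) : IsAnonymous (R k) := by
    induction k with
    | zero => exact hR0 ▸ fun x σ => by simpa [comp_def] using hperm x σ⁻¹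
    | succ k ih => exact ih.of_isAveragingStep (VCGtot_comp_perm v f hf) (hstep k)
  have hmono := monotone_of_isAveragingStep hND hstep
  have hbddA := bddAbove_of_isAveragingStep hND hstep
  have htend x := tendsto_atTop_ciSup (hmono x) (hbddA x)
  refine ⟨fun x => ⨆ k, R k x, htend, fun x σ => iSup_congr fun k => hanon k x σ⁻¹,
    fun θ => ?_, not_exists_dominating (fun k x => le_ciSup (hbddA x) k)
      (tendsto_residualInf hstep htend)⟩
  exact le_of_tendsto' (tendsto_finsetSum _ fun i _ => htend _) fun k => hND k θ

theorem stmt_10 {n : ℕ} (hn : 1 ≤ n) {D : Type} [Fintype D] [Nonempty D]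
    {Θ : Type} [Nonempty Θ]
    (v : D → Θ → ℝ) (f : (Fin (n+1) → Θ) → D)
    (hf : ∀ (θ : Fin (n+1) → Θ) (d : D),
      ∑ i, v d (θ i) ≤ ∑ i, v (f θ) (θ i))
    (r : (Fin n → Θ) → ℝ)
    (hperm : ∀ (x : Fin n → Θ) (σ : Equiv.Perm (Fin n)),
      r (fun i => x (σ⁻¹ i)) = r x)
    (hnd : ∀ θ : Fin (n+1) → Θ,
      ∑ i : Fin (n+1), r (θ ∘ i.succAbove) ≤ VCGtot v f θ)
    (R : ℕ → (Fin n → Θ) → ℝ) (hR0 : R 0 = r)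
    (hbdd : ∀ (k : ℕ) (i : Fin (n+1)) (θ : Fin (n+1) → Θ),
      BddBelow {y : ℝ | ∃ x : Θ, y = VCGtot v f (Function.update θ i x) -
        ∑ j ∈ Finset.univ.erase i, R k (Function.update θ i x ∘ j.succAbove)})
    (hrec : ∀ (k : ℕ) (i : Fin (n+1)) (θ : Fin (n+1) → Θ),
      R (k+1) (θ ∘ i.succAbove) =
        ((n : ℝ) / (n+1)) * R k (θ ∘ i.succAbove) +
        (1 / ((n : ℝ)+1)) * sInf {y : ℝ | ∃ x : Θ,
          y = VCGtot v f (Function.update θ i x) -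
            ∑ j ∈ Finset.univ.erase i, R k (Function.update θ i x ∘ j.succAbove)}) :
    ∃ Rinf : (Fin n → Θ) → ℝ,
      (∀ x : Fin n → Θ,
        Filter.Tendsto (fun k => R k x) Filter.atTop (nhds (Rinf x))) ∧
      (∀ (x : Fin n → Θ) (σ : Equiv.Perm (Fin n)),
        Rinf (fun i => x (σ⁻¹ i)) = Rinf x) ∧
      (∀ θ : Fin (n+1) → Θ,
        ∑ i : Fin (n+1), Rinf (θ ∘ i.succAbove) ≤ VCGtot v f θ) ∧
      ¬ ∃ r' : Fin (n+1) → (Fin (n+1) → Θ) → ℝ,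
        (∀ (i : Fin (n+1)) (θ θ' : Fin (n+1) → Θ),
          (∀ j, j ≠ i → θ j = θ' j) → r' i θ = r' i θ') ∧
        (∀ θ : Fin (n+1) → Θ, ∑ i, r' i θ ≤ VCGtot v f θ) ∧
        (∀ (i : Fin (n+1)) (θ : Fin (n+1) → Θ), Rinf (θ ∘ i.succAbove) ≤ r' i θ) ∧
        (∃ (i : Fin (n+1)) (θ : Fin (n+1) → Θ), Rinf (θ ∘ i.succAbove) < r' i θ) :=
  stmt_10_general v f hf r hperm hnd R hR0 hbdd hrec
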